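/- The 3-VFCA rule f(x,y,z) = (x₁y₁ + x₂y₁ + y₃z₁, x₁y₂ + x₂y₂ + y₃z₂, x₃y₁ + x₃y₂ + y₃z₃) is complete number-conserving on periodic configurations in the simplex Δ of any period L. -/

import Mathlib

/-!
On the simplex `a 0 + a 1 = 1 - a 2`, so the rule is the centre value plus a difference of fluxes
across the two adjacent bonds, `f x y z = y + Φ y z - Φ x y` with
`Φ a b = (a 2 * b 0, a 2 * b 1, a 2 * b 2 - a 2)` (`vfcaFlux`). Over one period of a periodic
configuration these differences telescope.
-/

open Finset

theorem Function.Periodic.sum_range_sub_pred {M : Type*} [AddCommGroup M] {L : ℕ} {J : ℤ → M}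
    (hJ : Function.Periodic J L) : ∑ i ∈ range L, (J i - J (i - 1)) = 0 := by
  have htel := Finset.sum_range_sub (fun n : ℕ => J ((n : ℤ) - 1)) L
  simp only [Nat.cast_add, Nat.cast_one, add_sub_cancel_right, Nat.cast_zero, zero_sub] at htel
  rw [htel, ← hJ (-1)]
  abel_nf

theorem sum_range_eq_of_periodic_flux {M : Type*} [AddCommGroup M] {L : ℕ} {u v J : ℤ → M}
    (hJ : Function.Periodic J L) (h : ∀ i, u i = v i + (J i - J (i - 1))) :
    ∑ i ∈ range L, u i = ∑ i ∈ range L, v i := by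
  simp only [h, sum_add_distrib, hJ.sum_range_sub_pred, add_zero]

def vfcaFlux (a b : Fin 3 → ℝ) : Fin 3 → ℝ :=
  ![a 2 * b 0, a 2 * b 1, a 2 * b 2 - a 2]

theorem vfca_eq_add_flux_sub_flux {a b c : Fin 3 → ℝ} (ha : ∑ m, a m = 1) (hb : ∑ m, b m = 1) :
    ![a 0 * b 0 + a 1 * b 0 + b 2 * c 0,
      a 0 * b 1 + a 1 * b 1 + b 2 * c 1,
      a 2 * b 0 + a 2 * b 1 + b 2 * c 2]
      = b + vfcaFlux b c - vfcaFlux a b := by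
  rw [Fin.sum_univ_three] at ha hb
  funext k
  fin_cases k <;>
    simp only [Fin.zero_eta, Fin.mk_one, Fin.reduceFinMk, Fin.isValue, Pi.add_apply, Pi.sub_apply,
      vfcaFlux, Matrix.cons_val]
  · linear_combination b 0 * ha
  · linear_combination b 1 * ha
  · linear_combination a 2 * hb

theorem stmt_11 (L : ℕ)
    (f : (Fin 3 → ℝ) → (Fin 3 → ℝ) → (Fin 3 → ℝ) → (Fin 3 → ℝ))
    (hf : ∀ x y z, f x y z =
      ![x 0 * y 0 + x 1 * y 0 + y 2 * z 0,
        x 0 * y 1 + x 1 * y 1 + y 2 * z 1,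
        x 2 * y 0 + x 2 * y 1 + y 2 * z 2])
    (x : ℤ → Fin 3 → ℝ) (hper : ∀ i, x (i + L) = x i)
    (hΔ : ∀ i, (∑ m, x i m) = 1 ∧ ∀ m, 0 ≤ x i m) :
    ∀ k, ∑ i ∈ Finset.range L, f (x ((i : ℤ) - 1)) (x (i : ℤ)) (x ((i : ℤ) + 1)) k
      = ∑ i ∈ Finset.range L, x (i : ℤ) k := by
  have hflux_periodic : Function.Periodic (fun i => vfcaFlux (x i) (x (i + 1))) L := by
    intro i
    simp only [add_right_comm i (L : ℤ) 1, hper]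
  have hconserved := sum_range_eq_of_periodic_flux
    (u := fun i => f (x (i - 1)) (x i) (x (i + 1))) (v := x) hflux_periodic fun i => by
      simp only [hf, vfca_eq_add_flux_sub_flux (hΔ _).1 (hΔ _).1, sub_add_cancel]
      abel
  intro k
  simpa only [Finset.sum_apply] using congrFun hconserved k
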